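/- For all real v > 1 and γ > 1, F_n(v,γ) = γ·v^{γ+2} - v^{2γ+1} - γ·v^{γ} + v is strictly negative. -/

import Mathlib

/-!
Dividing by `v ^ (γ + 1)` and writing `v = exp s` turns the expression into
`2 (γ sinh s - sinh (γ s))`. This is negative for `s > 0` and `γ > 1`: the difference
`sinh (γ t) - γ sinh t` vanishes at `0` and has derivative `γ (cosh (γ t) - cosh t) > 0`.
-/

open Real Set

theorem Real.mul_sinh_lt_sinh_mul {a s : ℝ} (ha : 1 < a) (hs : 0 < s) :
    a * sinh s < sinh (a * s) := by
  set g : ℝ → ℝ := fun t => sinh (a * t) - a * sinh t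
  have hg : ∀ t, HasDerivAt g (a * (cosh (a * t) - cosh t)) t := fun t =>
    (((hasDerivAt_id' t).const_mul a).sinh.fun_sub ((hasDerivAt_sinh t).const_mul a)).congr_deriv
      (by ring)
  have hg_mono : StrictMonoOn g (Ici 0) := by
    refine strictMonoOn_of_hasDerivWithinAt_pos (convex_Ici 0)
      (fun t _ => (hg t).continuousAt.continuousWithinAt) (fun t _ => (hg t).hasDerivWithinAt)
      fun t ht => ?_
    rw [interior_Ici, mem_Ioi] at ht
    have : cosh t < cosh (a * t) := by
      rw [cosh_lt_cosh, abs_of_pos ht, abs_of_pos (by positivity)]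
      nlinarith
    nlinarith
  have := hg_mono self_mem_Ici hs.le hs
  simpa [g] using this

theorem Real.mul_sub_inv_lt_rpow_sub_rpow_neg {x γ : ℝ} (hx : 1 < x) (hγ : 1 < γ) :
    γ * (x - x⁻¹) < x ^ γ - x ^ (-γ) := by
  have hx₀ : 0 < x := by linarith
  have hsinh : ∀ y : ℝ, sinh (y * log x) = (x ^ y - x ^ (-y)) / 2 := fun y => by
    rw [sinh_eq, rpow_def_of_pos hx₀, rpow_def_of_pos hx₀, mul_comm, neg_mul_eq_mul_neg]
  have hsinh_one : sinh (log x) = (x - x⁻¹) / 2 := by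
    simpa only [one_mul, rpow_one, rpow_neg_one] using hsinh 1
  have := mul_sinh_lt_sinh_mul hγ (log_pos hx)
  rw [hsinh_one, hsinh] at this
  linarith

theorem Fn_neg (v γ : ℝ) (hv : 1 < v) (hγ : 1 < γ) :
    γ * v ^ (γ + 2) - v ^ (2 * γ + 1) - γ * v ^ γ + v < 0 := by
  have hv₀ : 0 < v := by linarith
  have hfactor : γ * v ^ (γ + 2) - v ^ (2 * γ + 1) - γ * v ^ γ + v
      = -(v ^ (γ + 1) * ((v ^ γ - v ^ (-γ)) - γ * (v - v⁻¹))) := by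
    rw [rpow_add hv₀, rpow_add hv₀, rpow_add hv₀, two_mul, rpow_add hv₀, rpow_neg hv₀.le,
      rpow_two, rpow_one]
    have : v ^ γ ≠ 0 := (rpow_pos_of_pos hv₀ γ).ne'
    field_simp
    ring
  rw [hfactor, neg_lt_zero]
  exact mul_pos (rpow_pos_of_pos hv₀ _) (sub_pos.2 (mul_sub_inv_lt_rpow_sub_rpow_neg hv hγ))
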